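/- arXiv:1609.05277 — 5 statements merged into one kernel-verified Lean document; each statement's English description precedes it below -/
import Mathlib

section
/- Let n be a positive integer and let r be an integer with 0 ≤ r ≤ (n-1)/2. Define the n×n matrix Q_{r,n} = (q_{i,j}) by q_{i,j} = 2/(2r+1) if i+j ≤ r+1 or i+j ≥ 2n-r+1, and q_{i,j} = a_{i,j}/(2r+1) otherwise. Then Q_{r,n} is a doubly stochastic matrix, and q_{i,j} ≠ 0 if and only if a_{i,j} = 1 (i.e., Q_{r,n} has the same support as A_{r,n}). -/
/-!
Multiplying by `2r+1`, row `i` of `Q_{r,n}` is the indicator of the band `|i - j| ≤ r` plus the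
indicator of the corner cells of that row, since every corner cell lies in the band. Near the top
the band of row `i` is cut off by the edge of the matrix in exactly as many cells as the corner
contributes, and symmetrically near the bottom; as `2r+1 ≤ n`, no band is cut off at both ends.
So every row sum is `2r+1`, and by symmetry so is every column sum.
-/

open Finset

/-- The cells of the two corner triangles of `Q_{r,n}`, in `0`-based indices. -/
def IsCornerCell (n r i j : ℕ) : Prop :=
  i + 1 + (j + 1) ≤ r + 1 ∨ 2 * n - r + 1 ≤ i + 1 + (j + 1)

def InBand (r i j : ℕ) : Prop :=
  |(i : ℤ) - j| ≤ r

instance (n r i j : ℕ) : Decidable (IsCornerCell n r i j) := inferInstanceAs (Decidable (_ ∨ _))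

instance (r i j : ℕ) : Decidable (InBand r i j) := inferInstanceAs (Decidable (_ ≤ _))

lemma isCornerCell_comm (n r i j : ℕ) : IsCornerCell n r i j ↔ IsCornerCell n r j i := by
  unfold IsCornerCell; omega

lemma inBand_comm (r i j : ℕ) : InBand r i j ↔ InBand r j i := by
  unfold InBand; rw [abs_sub_comm]

lemma inBand_iff (r i j : ℕ) : InBand r i j ↔ i ≤ j + r ∧ j ≤ i + r := by
  unfold InBand; rw [abs_le]; omega

lemma IsCornerCell.inBand {n r i j : ℕ} (hi : i < n) (hj : j < n) (h : IsCornerCell n r i j) :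
    InBand r i j := by
  unfold IsCornerCell at h; rw [inBand_iff]; omega

lemma card_isCornerCell_add_card_inBand {n r i : ℕ} (hr : 2 * r + 1 ≤ n) (hi : i < n) :
    #{j ∈ range n | IsCornerCell n r i j} + #{j ∈ range n | InBand r i j} = 2 * r + 1 := by
  have hcorner : {j ∈ range n | IsCornerCell n r i j} = Ico 0 (r - i) ∪ Ico (2 * n - r - 1 - i) n := by
    ext j; simp only [mem_filter, mem_range, mem_union, mem_Ico]; unfold IsCornerCell; omega
  have hband : {j ∈ range n | InBand r i j} = Ico (i - r) (min (i + r + 1) n) := by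
    ext j; simp only [inBand_iff, mem_filter, mem_range, mem_Ico]; omega
  have hdisj : Disjoint (Ico 0 (r - i)) (Ico (2 * n - r - 1 - i) n) := by
    rw [disjoint_left]; intro j; simp only [mem_Ico]; omega
  rw [hcorner, hband, card_union_of_disjoint hdisj, Nat.card_Ico, Nat.card_Ico, Nat.card_Ico]
  omega

/-- `(2r+1) • Q_{r,n}`, in `0`-based indices. -/
def scaledQ (n r i j : ℕ) : ℝ :=
  if IsCornerCell n r i j then 2 else if InBand r i j then 1 else 0

lemma scaledQ_comm (n r i j : ℕ) : scaledQ n r i j = scaledQ n r j i := by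
  simp only [scaledQ, isCornerCell_comm n r i j, inBand_comm r i j]

lemma scaledQ_nonneg (n r i j : ℕ) : 0 ≤ scaledQ n r i j := by
  unfold scaledQ; split_ifs <;> norm_num

lemma scaledQ_ne_zero_iff {n r i j : ℕ} (hi : i < n) (hj : j < n) :
    scaledQ n r i j ≠ 0 ↔ InBand r i j := by
  unfold scaledQ
  split_ifs with hC hB
  · simpa using hC.inBand hi hj
  · simpa using hB
  · simpa using hB

lemma scaledQ_eq_add {n r i j : ℕ} (hi : i < n) (hj : j < n) :
    scaledQ n r i j =
      (if IsCornerCell n r i j then 1 else 0) + (if InBand r i j then 1 else 0) := by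
  unfold scaledQ
  split_ifs with hC hB hB
  · norm_num
  · exact absurd (hC.inBand hi hj) hB
  all_goals norm_num

lemma sum_scaledQ {n r i : ℕ} (hr : 2 * r + 1 ≤ n) (hi : i < n) :
    ∑ j ∈ range n, scaledQ n r i j = 2 * r + 1 := by
  rw [sum_congr rfl fun j hj => scaledQ_eq_add hi (mem_range.mp hj), sum_add_distrib,
    sum_boole, sum_boole]
  exact_mod_cast card_isCornerCell_add_card_inBand hr hi

theorem first_class_Q_small_radius_doubly_stochastic_general (n r : ℕ)
    (hr : 2 * r + 1 ≤ n)
    (Q : Matrix (Fin n) (Fin n) ℝ)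
    (hQ : ∀ i j : Fin n,
      Q i j =
        if ((i : ℕ) + 1) + ((j : ℕ) + 1) ≤ r + 1
            ∨ 2 * n - r + 1 ≤ ((i : ℕ) + 1) + ((j : ℕ) + 1) then
          2 / (2 * (r : ℝ) + 1)
        else
          (if |((i : ℕ) : ℤ) - ((j : ℕ) : ℤ)| ≤ (r : ℤ) then (1 : ℝ) else 0)
            / (2 * (r : ℝ) + 1)) :
    (∀ i j, 0 ≤ Q i j) ∧
    (∀ i, ∑ j, Q i j = 1) ∧
    (∀ j, ∑ i, Q i j = 1) ∧
    (∀ i j : Fin n, Q i j ≠ 0 ↔ |((i : ℕ) : ℤ) - ((j : ℕ) : ℤ)| ≤ (r : ℤ)) := by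
  have hd : (2 * r + 1 : ℝ) ≠ 0 := by positivity
  have hQ' : ∀ i j : Fin n, Q i j = scaledQ n r i j / (2 * r + 1) := fun i j => by
    rw [hQ, scaledQ, ← ite_div]; rfl
  have hrow : ∀ i : Fin n, ∑ j, Q i j = 1 := fun i => by
    simp only [hQ', ← sum_div]
    rw [Fin.sum_univ_eq_sum_range (scaledQ n r i) n, sum_scaledQ hr i.isLt, div_self hd]
  refine ⟨fun i j => ?_, hrow, fun j => ?_, fun i j => ?_⟩
  · rw [hQ']; exact div_nonneg (scaledQ_nonneg _ _ _ _) (by positivity)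
  · simpa only [hQ', scaledQ_comm n r _ j] using hrow j
  · rw [hQ', div_ne_zero_iff, scaledQ_ne_zero_iff i.isLt j.isLt]
    exact and_iff_left hd

/-- The matrix `Q_{r,n}` (first class, case `0 ≤ r ≤ (n-1)/2`), defined with
1-based indices `i+1, j+1` by `q_{i,j} = 2/(2r+1)` if `i+j ≤ r+1` or
`i+j ≥ 2n-r+1`, and `q_{i,j} = a_{i,j}/(2r+1)` otherwise, is a doubly
stochastic matrix with the same support as `A_{r,n}`. -/
theorem first_class_Q_small_radius_doubly_stochastic (n r : ℕ)
    (hn : 0 < n) (hr : 2 * r + 1 ≤ n)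
    (Q : Matrix (Fin n) (Fin n) ℝ)
    (hQ : ∀ i j : Fin n,
      Q i j =
        if ((i : ℕ) + 1) + ((j : ℕ) + 1) ≤ r + 1
            ∨ 2 * n - r + 1 ≤ ((i : ℕ) + 1) + ((j : ℕ) + 1) then
          2 / (2 * (r : ℝ) + 1)
        else
          (if |((i : ℕ) : ℤ) - ((j : ℕ) : ℤ)| ≤ (r : ℤ) then (1 : ℝ) else 0)
            / (2 * (r : ℝ) + 1)) :
    (∀ i j, 0 ≤ Q i j) ∧
    (∀ i, ∑ j, Q i j = 1) ∧
    (∀ j, ∑ i, Q i j = 1) ∧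
    (∀ i j : Fin n, Q i j ≠ 0 ↔ |((i : ℕ) : ℤ) - ((j : ℕ) : ℤ)| ≤ (r : ℤ)) :=
  first_class_Q_small_radius_doubly_stochastic_general n r hr Q hQ
end

section
/- For every integer r ≥ 1, the unique real number α > 0 satisfying α^{r+1} - α - 1 = 0 obeys the bounds 1 + ln(2)/(r+1) ≤ α ≤ 1 + ln(2)/r. In particular, α = 1 + ln(2)/r + o(1/r) as r → ∞. -/
/-!
The polynomial `x ^ (r + 1) - x - 1` is strictly increasing on `[1, ∞)` and its positive root lies
there, so both bounds amount to a sign check at `1 + c` for `c = log 2 / (r + 1)` and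
`c = log 2 / r`. At the lower point, `(1 + log 2 / n) ^ n ≤ exp (log 2) = 2`. At the upper
point, `u = log 2 / r` satisfies `(r + 1) log (1 + u) ≥ (r + 1) · 2u / (u + 2) ≥ log 2 + u / 2
≥ log (2 + u)` once `u ≤ 2 (1 - log 2)`, i.e. for `r ≥ 2`. The two bounds pinch
`r (α - 1 - log 2 / r)` between `-log 2 / (r + 1)` and `0`.
-/

open Real Set Filter Topology

lemma strictMonoOn_pow_succ_sub_self {n : ℕ} (hn : n ≠ 0) :
    StrictMonoOn (fun x : ℝ => x ^ (n + 1) - x - 1) (Ici 1) := by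
  intro x (hx : 1 ≤ x) y (hy : 1 ≤ y) hxy
  have hxn : 1 ≤ x ^ n := one_le_pow₀ hx
  have hxyn : x ^ n < y ^ n := pow_lt_pow_left₀ hxy (by linarith) hn
  simp only [pow_succ]
  nlinarith

lemma le_root_of_nonpos {n : ℕ} (hn : n ≠ 0) {a α : ℝ} (ha : 1 ≤ a) (hα : 1 ≤ α)
    (hroot : α ^ (n + 1) - α - 1 = 0) (hfa : a ^ (n + 1) - a - 1 ≤ 0) : a ≤ α :=
  (strictMonoOn_pow_succ_sub_self hn).le_iff_le ha hα |>.mp (hroot ▸ hfa)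

lemma root_le_of_nonneg {n : ℕ} (hn : n ≠ 0) {b α : ℝ} (hb : 1 ≤ b) (hα : 1 ≤ α)
    (hroot : α ^ (n + 1) - α - 1 = 0) (hfb : 0 ≤ b ^ (n + 1) - b - 1) : α ≤ b :=
  (strictMonoOn_pow_succ_sub_self hn).le_iff_le hα hb |>.mp (hroot ▸ hfb)

lemma one_le_of_pow_succ_eq_add_one {n : ℕ} {α : ℝ} (hα : 0 < α)
    (hroot : α ^ (n + 1) - α - 1 = 0) : 1 ≤ α := by
  by_contra! h
  have := pow_le_one₀ hα.le h.le (n := n + 1)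
  linarith

lemma one_add_log_two_div_pow_le_two (n : ℕ) : (1 + log 2 / n) ^ n ≤ 2 := by
  have := one_sub_div_pow_le_exp_neg (n := n) (t := -log 2)
    (by linarith [log_nonneg one_le_two, n.cast_nonneg (α := ℝ)])
  rwa [neg_neg, exp_log two_pos, neg_div, sub_neg_eq_add] at this

lemma two_add_le_one_add_pow {r : ℕ} {u : ℝ} (hu : 0 < u) (hru : r * u = log 2)
    (hu_le : u ≤ 2 * (1 - log 2)) : 2 + u ≤ (1 + u) ^ (r + 1) := by
  have hlog_one_add : 2 * u / (u + 2) ≤ log (1 + u) := le_log_one_add_of_nonneg hu.le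
  have hlog_two_add : log (2 + u) ≤ log 2 + u / 2 := by
    rw [show (2 : ℝ) + u = 2 * (1 + u / 2) by ring, log_mul two_ne_zero (by positivity)]
    linarith [log_le_sub_one_of_pos (show 0 < 1 + u / 2 by positivity)]
  have hkey : log 2 + u / 2 ≤ (r + 1) * (2 * u / (u + 2)) := by
    rw [mul_div_assoc', le_div_iff₀ (by positivity)]
    nlinarith
  rw [← log_le_log_iff (by positivity) (by positivity), log_pow]
  push_cast
  nlinarith

lemma two_add_le_one_add_log_two_div_pow {r : ℕ} (hr : 1 ≤ r) :
    2 + log 2 / r ≤ (1 + log 2 / r) ^ (r + 1) := by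
  have hlog2 := log_two_gt_d9
  obtain rfl | hr2 : r = 1 ∨ 2 ≤ r := by omega
  · -- `(1 + log 2) ^ 2 ≥ 2 + log 2` reduces to `log 2 * (1 + log 2) ≥ 1`.
    norm_num
    nlinarith [log_two_lt_d9]
  · have hr2' : (2 : ℝ) ≤ r := by exact_mod_cast hr2
    apply two_add_le_one_add_pow (by positivity) (by field_simp)
    calc log 2 / r ≤ log 2 / 2 := by gcongr
      _ ≤ 2 * (1 - log 2) := by linarith [log_two_lt_d9]

lemma root_bounds {r : ℕ} (hr : 1 ≤ r) {α : ℝ} (hα : 0 < α)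
    (hroot : α ^ (r + 1) - α - 1 = 0) :
    1 + log 2 / (r + 1) ≤ α ∧ α ≤ 1 + log 2 / r := by
  have hr0 : r ≠ 0 := by omega
  have hα1 := one_le_of_pow_succ_eq_add_one hα hroot
  have hlower : 0 ≤ log 2 / (r + 1) := by positivity
  have hupper : 0 ≤ log 2 / r := by positivity
  constructor
  · refine le_root_of_nonpos hr0 (by linarith) hα1 hroot ?_
    have := one_add_log_two_div_pow_le_two (r + 1)
    push_cast at this
    linarith
  · refine root_le_of_nonneg hr0 (by linarith) hα1 hroot ?_
    linarith [two_add_le_one_add_log_two_div_pow hr]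

lemma tendsto_mul_sub_of_le_of_le {c : ℝ} {a : ℕ → ℝ}
    (h : ∀ᶠ r : ℕ in atTop, 1 + c / (r + 1) ≤ a r ∧ a r ≤ 1 + c / r) :
    Tendsto (fun r : ℕ => (r : ℝ) * (a r - (1 + c / r))) atTop (𝓝 0) := by
  have hlower : Tendsto (fun r : ℕ => -c / ((r : ℝ) + 1)) atTop (𝓝 0) := by
    simpa [div_eq_mul_inv] using tendsto_one_div_add_atTop_nhds_zero_nat.const_mul (-c)
  refine tendsto_of_tendsto_of_tendsto_of_le_of_le' hlower tendsto_const_nhds ?_ ?_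
  all_goals filter_upwards [h, eventually_gt_atTop 0] with r ⟨hlo, hhi⟩ hr
  all_goals
    have hr' : (0 : ℝ) < r := by exact_mod_cast hr
    rw [mul_sub, mul_add, mul_div_cancel₀ c hr'.ne']
  · calc -c / (r + 1) = r * (1 + c / (r + 1)) - (r * 1 + c) := by field_simp; ring
      _ ≤ r * a r - (r * 1 + c) := by gcongr
  · calc r * a r - (r * 1 + c) ≤ r * (1 + c / r) - (r * 1 + c) := by gcongr
      _ = 0 := by field_simp; ring

/-- For every integer `r ≥ 1`, any positive root `α` of `α^(r+1) - α - 1 = 0`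
satisfies `1 + ln(2)/(r+1) ≤ α ≤ 1 + ln(2)/r`. In particular, for any choice
`α : ℕ → ℝ` of such roots, `α r = 1 + ln(2)/r + o(1/r)` as `r → ∞`, i.e.,
`r · (α r - 1 - ln(2)/r) → 0`. -/
theorem root_asymptotics :
    (∀ r : ℕ, 1 ≤ r → ∀ α : ℝ, 0 < α → α ^ (r + 1) - α - 1 = 0 →
      1 + Real.log 2 / ((r : ℝ) + 1) ≤ α ∧ α ≤ 1 + Real.log 2 / (r : ℝ)) ∧
    (∀ α : ℕ → ℝ,
      (∀ r : ℕ, 1 ≤ r → 0 < α r ∧ (α r) ^ (r + 1) - α r - 1 = 0) →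
      Filter.Tendsto (fun r : ℕ => (r : ℝ) * (α r - (1 + Real.log 2 / (r : ℝ))))
        Filter.atTop (nhds 0)) := by
  refine ⟨fun r hr α hα hroot => root_bounds hr hα hroot, fun α hα => ?_⟩
  apply tendsto_mul_sub_of_le_of_le
  filter_upwards [eventually_ge_atTop 1] with r hr
  exact root_bounds hr (hα r hr).1 (hα r hr).2
end

section
/- Let n and r be integers with 1 ≤ r ≤ (n-2)/2. Let α > 0 satisfy α^{r+1} - α - 1 = 0 and set C = (α-1)/(α+1). Define the n×n matrix Q_{r,n} = (q_{i,j}) by q_{i,j} = a_{i,j} · C · q̃_{i,j}, where q̃_{i,j} = α^{(r+1-i)+(r+1-j)} if 1 ≤ i ≤ r+1 and 1 ≤ j ≤ r+1; q̃_{i,j} = α^{(i-(n-r))+(j-(n-r))} if n-r ≤ i ≤ n and n-r ≤ j ≤ n; and q̃_{i,j} = α^{|i-j|} otherwise. Then Q_{r,n} is a doubly stochastic matrix with the same support as A_{r,n}. -/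
/-!
Since `α > 0` and `α^(r+1) = α + 1`, we get `α > 1`, so the entries are positive exactly on the
band. `Q` is symmetric and invariant under `i ↦ n-1-i`, so it suffices to sum the rows
`a ≤ n-r-2`. Row `a ≤ r` of `q̃` is `α^(r-a) (α^r, …, α, 1)` followed by
`α^(r+1-a) (1, α, …, α^(a-1))`, and every row `r ≤ a ≤ n-r-2` is a translate of row `r`.
Multiplied by `α - 1`, such a row sum telescopes to
`α^(r-a) (α^(r+1) - 1) + α^(r+1-a) (α^a - 1) = α^(r+1) = α + 1`, using `α^(r+1) - 1 = α`.
-/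

open Finset

namespace SecondClassQ

variable {α : ℝ} {n r : ℕ}

lemma one_lt_of_pow_succ_eq_add_one (hα : 0 < α) (h : α ^ (r + 1) = α + 1) : 1 < α := by
  by_contra! hle
  have : α ^ (r + 1) ≤ α := pow_le_of_le_one hα.le hle (Nat.succ_ne_zero r)
  linarith

lemma geom_blocks_mul_sub_one_eq (h : α ^ (r + 1) = α + 1) {a : ℕ} (ha : a ≤ r) :
    (α ^ (r - a) * ∑ k ∈ range (r + 1), α ^ k + α ^ (r + 1 - a) * ∑ k ∈ range a, α ^ k)
      * (α - 1) = α + 1 := by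
  obtain ⟨s, rfl⟩ := Nat.exists_eq_add_of_le ha
  have hlong := geom_sum_mul α (a + s + 1)
  have hshort := geom_sum_mul α a
  rw [show a + s - a = s by omega, show a + s + 1 - a = s + 1 by omega]
  linear_combination α ^ s * hlong + α ^ (s + 1) * hshort + (α ^ s + 1) * h

-- `qTilde α n r i j` and `qEntry α n r i j` are the paper's `q̃_{i+1,j+1}` and `q_{i+1,j+1}`.
noncomputable def qTilde (α : ℝ) (n r i j : ℕ) : ℝ :=
  if i + 1 ≤ r + 1 ∧ j + 1 ≤ r + 1 then α ^ ((r + 1 - (i + 1)) + (r + 1 - (j + 1)))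
  else if n - r ≤ i + 1 ∧ n - r ≤ j + 1 then α ^ ((i + 1 - (n - r)) + (j + 1 - (n - r)))
  else α ^ ((i : ℤ) - (j : ℤ)).natAbs

noncomputable def qEntry (α : ℝ) (n r i j : ℕ) : ℝ :=
  (if |(i : ℤ) - (j : ℤ)| ≤ (r : ℤ) then (1 : ℝ) else 0) * ((α - 1) / (α + 1)) *
    qTilde α n r i j

lemma qTilde_pos (hα : 0 < α) (i j : ℕ) : 0 < qTilde α n r i j := by
  unfold qTilde; split_ifs <;> positivity

lemma qTilde_comm (i j : ℕ) : qTilde α n r i j = qTilde α n r j i := by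
  unfold qTilde
  split_ifs <;> first | omega | (congr 1; omega)

lemma qTilde_reflect (hn : 2 * r + 2 ≤ n) {i j : ℕ} (hi : i < n) (hj : j < n) :
    qTilde α n r (n - (i + 1)) (n - (j + 1)) = qTilde α n r i j := by
  unfold qTilde
  split_ifs <;> first | omega | (congr 1; omega)

lemma qTilde_eq_pow_natAbs {a : ℕ} (hra : r ≤ a) (han : a + r + 2 ≤ n) (j : ℕ) :
    qTilde α n r a j = α ^ ((a : ℤ) - (j : ℤ)).natAbs := by
  unfold qTilde
  split_ifs <;> first | omega | rfl | (congr 1; omega)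

lemma sum_range_qTilde_of_le (hn : 2 * r + 2 ≤ n) {a : ℕ} (ha : a ≤ r) :
    ∑ j ∈ range (a + r + 1), qTilde α n r a j =
      α ^ (r - a) * ∑ k ∈ range (r + 1), α ^ k +
        α ^ (r + 1 - a) * ∑ k ∈ range a, α ^ k := by
  rw [show a + r + 1 = (r + 1) + a by omega, sum_range_add, mul_sum, mul_sum,
    ← sum_range_reflect (fun k => α ^ (r - a) * α ^ k)]
  congr 1
  · refine sum_congr rfl fun k hk => ?_
    rw [mem_range] at hk
    rw [← pow_add, qTilde, if_pos (by omega)]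
    congr 1
    omega
  · refine sum_congr rfl fun k hk => ?_
    rw [mem_range] at hk
    rw [← pow_add, qTilde, if_neg (by omega), if_neg (by omega)]
    congr 1
    omega

lemma sum_Ico_qTilde_eq_of_le {a : ℕ} (hra : r ≤ a) (han : a + r + 2 ≤ n) :
    ∑ j ∈ Ico (a - r) (a + r + 1), qTilde α n r a j =
      ∑ j ∈ range (r + r + 1), qTilde α n r r j := by
  rw [sum_Ico_eq_sum_range, show a + r + 1 - (a - r) = r + r + 1 by omega]
  refine sum_congr rfl fun k hk => ?_
  rw [mem_range] at hk
  rw [qTilde_eq_pow_natAbs hra han, qTilde_eq_pow_natAbs le_rfl (by omega)]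
  congr 1
  omega

lemma qEntry_comm (i j : ℕ) : qEntry α n r i j = qEntry α n r j i := by
  rw [qEntry, qEntry, abs_sub_comm, qTilde_comm]

lemma qEntry_rev (hn : 2 * r + 2 ≤ n) (i j : Fin n) :
    qEntry α n r (Fin.rev i) (Fin.rev j) = qEntry α n r i j := by
  simp only [qEntry, Fin.val_rev, qTilde_reflect hn i.isLt j.isLt, abs_le]
  split_ifs <;> first | rfl | omega

lemma qEntry_nonneg (hα : 1 ≤ α) (i j : ℕ) : 0 ≤ qEntry α n r i j := by
  have hq := qTilde_pos (n := n) (r := r) (by linarith : 0 < α) i j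
  have hC : 0 ≤ (α - 1) / (α + 1) := div_nonneg (by linarith) (by linarith)
  unfold qEntry
  positivity

lemma qEntry_ne_zero_iff (hα : 1 < α) {i j : ℕ} :
    qEntry α n r i j ≠ 0 ↔ |(i : ℤ) - (j : ℤ)| ≤ (r : ℤ) := by
  have hq := qTilde_pos (n := n) (r := r) (by linarith : 0 < α) i j
  have hC : 0 < (α - 1) / (α + 1) := div_pos (by linarith) (by linarith)
  unfold qEntry
  split_ifs with h
  · simpa only [one_mul, h, iff_true] using (mul_pos hC hq).ne'
  · simp [h]

lemma sum_range_qEntry {a : ℕ} (han : a + r < n) :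
    ∑ j ∈ range n, qEntry α n r a j =
      (α - 1) / (α + 1) * ∑ j ∈ Ico (a - r) (a + r + 1), qTilde α n r a j := by
  simp only [qEntry, ite_mul, one_mul, zero_mul]
  rw [← sum_filter, mul_sum]
  congr 1
  ext j
  simp only [mem_filter, mem_range, mem_Ico, abs_le]
  omega

lemma sum_range_qEntry_eq_one (hα : 1 < α) (h : α ^ (r + 1) = α + 1) (hn : 2 * r + 2 ≤ n)
    {a : ℕ} (han : a + r + 2 ≤ n) : ∑ j ∈ range n, qEntry α n r a j = 1 := by
  have top_rows :
      ∀ b ≤ r, (α - 1) / (α + 1) * ∑ j ∈ range (b + r + 1), qTilde α n r b j = 1 := by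
    intro b hb
    rw [sum_range_qTilde_of_le hn hb, div_mul_eq_mul_div, div_eq_one_iff_eq (by linarith),
      mul_comm, geom_blocks_mul_sub_one_eq h hb]
  rw [sum_range_qEntry (by omega)]
  rcases le_total a r with har | hra
  · rw [Nat.sub_eq_zero_of_le har, ← range_eq_Ico]
    exact top_rows a har
  · rw [sum_Ico_qTilde_eq_of_le hra han]
    exact top_rows r le_rfl

lemma sum_qEntry_row (hα : 1 < α) (h : α ^ (r + 1) = α + 1) (hn : 2 * r + 2 ≤ n)
    (i : Fin n) : ∑ j : Fin n, qEntry α n r i j = 1 := by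
  rcases le_or_gt (i + r + 2) n with hi | hi
  · rw [Fin.sum_univ_eq_sum_range (fun j => qEntry α n r i j)]
    exact sum_range_qEntry_eq_one hα h hn hi
  · calc ∑ j : Fin n, qEntry α n r i j
        = ∑ j : Fin n, qEntry α n r (Fin.rev (Fin.rev i)) (Fin.rev j) := by
          rw [← Equiv.sum_comp Fin.revPerm]; simp
      _ = ∑ j : Fin n, qEntry α n r (Fin.rev i) j := by simp only [qEntry_rev hn]
      _ = 1 := by
          rw [Fin.sum_univ_eq_sum_range (fun j => qEntry α n r (Fin.rev i) j)]
          exact sum_range_qEntry_eq_one hα h hn (by rw [Fin.val_rev]; omega)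

end SecondClassQ

open SecondClassQ in
theorem second_class_Q_small_radius_doubly_stochastic_general (n r : ℕ)
    (h2 : 2 * r + 2 ≤ n)
    (α : ℝ) (hα : 0 < α) (hαeq : α ^ (r + 1) - α - 1 = 0)
    (C : ℝ) (hC : C = (α - 1) / (α + 1))
    (Q : Matrix (Fin n) (Fin n) ℝ)
    (hQ : ∀ i j : Fin n,
      Q i j =
        (if |((i : ℕ) : ℤ) - ((j : ℕ) : ℤ)| ≤ (r : ℤ) then (1 : ℝ) else 0) * C *
          (if ((i : ℕ) + 1 ≤ r + 1) ∧ ((j : ℕ) + 1 ≤ r + 1) then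
            α ^ ((r + 1 - ((i : ℕ) + 1)) + (r + 1 - ((j : ℕ) + 1)))
          else if (n - r ≤ (i : ℕ) + 1) ∧ (n - r ≤ (j : ℕ) + 1) then
            α ^ ((((i : ℕ) + 1) - (n - r)) + (((j : ℕ) + 1) - (n - r)))
          else
            α ^ (((i : ℕ) : ℤ) - ((j : ℕ) : ℤ)).natAbs)) :
    (∀ i j, 0 ≤ Q i j) ∧
    (∀ i, ∑ j, Q i j = 1) ∧
    (∀ j, ∑ i, Q i j = 1) ∧
    (∀ i j : Fin n, Q i j ≠ 0 ↔ |((i : ℕ) : ℤ) - ((j : ℕ) : ℤ)| ≤ (r : ℤ)) := by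
  subst hC
  have hpow : α ^ (r + 1) = α + 1 := by linarith
  have hα1 : 1 < α := one_lt_of_pow_succ_eq_add_one hα hpow
  have hQ' : ∀ i j : Fin n, Q i j = qEntry α n r i j := hQ
  simp only [hQ']
  refine ⟨fun i j => qEntry_nonneg hα1.le i j, sum_qEntry_row hα1 hpow h2, fun j => ?_,
    fun i j => qEntry_ne_zero_iff hα1⟩
  simp only [qEntry_comm _ (j : ℕ)]
  exact sum_qEntry_row hα1 hpow h2 j

/-- The matrix `Q_{r,n}` (second class, case `1 ≤ r ≤ (n-2)/2`), defined with
1-based indices `i+1, j+1` by `q_{i,j} = a_{i,j} · C · q̃_{i,j}` with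
`C = (α-1)/(α+1)` and `α > 0` the root of `α^(r+1) - α - 1 = 0`, is a doubly
stochastic matrix with the same support as `A_{r,n}`. -/
theorem second_class_Q_small_radius_doubly_stochastic (n r : ℕ)
    (h1 : 1 ≤ r) (h2 : 2 * r + 2 ≤ n)
    (α : ℝ) (hα : 0 < α) (hαeq : α ^ (r + 1) - α - 1 = 0)
    (C : ℝ) (hC : C = (α - 1) / (α + 1))
    (Q : Matrix (Fin n) (Fin n) ℝ)
    (hQ : ∀ i j : Fin n,
      Q i j =
        (if |((i : ℕ) : ℤ) - ((j : ℕ) : ℤ)| ≤ (r : ℤ) then (1 : ℝ) else 0) * C *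
          (if ((i : ℕ) + 1 ≤ r + 1) ∧ ((j : ℕ) + 1 ≤ r + 1) then
            α ^ ((r + 1 - ((i : ℕ) + 1)) + (r + 1 - ((j : ℕ) + 1)))
          else if (n - r ≤ (i : ℕ) + 1) ∧ (n - r ≤ (j : ℕ) + 1) then
            α ^ ((((i : ℕ) + 1) - (n - r)) + (((j : ℕ) + 1) - (n - r)))
          else
            α ^ (((i : ℕ) : ℤ) - ((j : ℕ) : ℤ)).natAbs)) :
    (∀ i j, 0 ≤ Q i j) ∧
    (∀ i, ∑ j, Q i j = 1) ∧
    (∀ j, ∑ i, Q i j = 1) ∧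
    (∀ i j : Fin n, Q i j ≠ 0 ↔ |((i : ℕ) : ℤ) - ((j : ℕ) : ℤ)| ≤ (r : ℤ)) :=
  second_class_Q_small_radius_doubly_stochastic_general n r h2 α hα hαeq C hC Q hQ
end

section
/- Let n and r be integers with (n-1)/2 < r < n-1, let α > 0 satisfy α^{n-r} + (2r-n)·α - (2r-n+2) = 0, and set C = (α-1)·α^{-(n-r)}. Define exponents μ_i for i ∈ [n] by μ_i = (n-r) - i for 1 ≤ i ≤ n-r, μ_i = 0 for n-r ≤ i ≤ r+1, and μ_i = i - (r+1) for r+1 ≤ i ≤ n. Define the n×n matrix Q_{r,n} = (q_{i,j}) by q_{i,j} = a_{i,j} · C · α^{μ_i + μ_j}. Then Q_{r,n} is a doubly stochastic matrix with the same support as A_{r,n}. -/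
/-!
The weights `α ^ μ_j` are geometric at both ends of `[n]` and constant in the middle, so
`(α - 1)` times any sum of consecutive weights telescopes. The equation defining `α` says
exactly that `(α - 1) · ∑_j α ^ μ_j = α ^ (n - r)`. In row `i` the band misses either a tail
or a head of the indices (or nothing), and removing it divides this total by `α ^ μ_i`, so
every row of `Q` sums to `1`. Since `Q` is symmetric, so does every column.
-/

open Finset

/-- The paper's `μ_{j+1}` for the 0-based index `j`, with `m = n - r`; since `m ≤ r + 1`,
at most one of the two truncated differences is nonzero. -/
def bandExponent (m r j : ℕ) : ℕ := (m - 1 - j) + (j - r)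

section BandExponent

variable {m r j : ℕ}

lemma bandExponent_of_lt (hmr : m ≤ r + 1) (hj : j < m) : bandExponent m r j = m - 1 - j := by
  unfold bandExponent; omega

lemma bandExponent_of_le (hmr : m ≤ r + 1) (hj : r ≤ j) : bandExponent m r j = j - r := by
  unfold bandExponent; omega

lemma bandExponent_eq_zero (hmj : m ≤ j + 1) (hjr : j ≤ r) : bandExponent m r j = 0 := by
  unfold bandExponent; omega

end BandExponent

section BandSums

variable {R : Type*} [CommRing R] (α : R) {m r : ℕ}

lemma sub_one_mul_sum_range_pow_bandExponent_head (hmr : m ≤ r + 1) {hi : ℕ} (hhi : hi ≤ m) :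
    (α - 1) * ∑ j ∈ range hi, α ^ bandExponent m r j = α ^ m - α ^ (m - hi) := by
  induction hi with
  | zero => simp
  | succ hi ih =>
    rw [sum_range_succ, mul_add, ih (by omega), bandExponent_of_lt hmr (by omega),
      show m - hi = m - 1 - hi + 1 by omega, show m - (hi + 1) = m - 1 - hi by omega, pow_succ]
    ring

lemma sub_one_mul_sum_Ico_pow_bandExponent_tail (hmr : m ≤ r + 1) {lo hi : ℕ} (hlo : r ≤ lo)
    (hhi : lo ≤ hi) :
    (α - 1) * ∑ j ∈ Ico lo hi, α ^ bandExponent m r j = α ^ (hi - r) - α ^ (lo - r) := by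
  induction hi, hhi using Nat.le_induction with
  | base => simp
  | succ hi hlohi ih =>
    rw [sum_Ico_succ_top hlohi, mul_add, ih, bandExponent_of_le hmr (by omega),
      show hi + 1 - r = hi - r + 1 by omega, pow_succ]
    ring

lemma sum_Ico_pow_bandExponent_middle {lo hi : ℕ} (hlo : m ≤ lo + 1) (hhi : hi ≤ r + 1) :
    ∑ j ∈ Ico lo hi, α ^ bandExponent m r j = ((hi - lo : ℕ) : R) := by
  rw [sum_congr rfl fun j hj => by
    rw [bandExponent_eq_zero (by simp at hj; omega) (by simp at hj; omega), pow_zero]]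
  simp

variable (hm : 1 ≤ m) (hmr : m ≤ r + 1) (heq : α ^ m + ((r : R) - m) * α = r - m + 2)
include hm hmr heq

lemma sub_one_mul_sum_range_pow_bandExponent :
    (α - 1) * ∑ j ∈ range (m + r), α ^ bandExponent m r j = α ^ m := by
  rw [← sum_range_add_sum_Ico _ (by omega : r + 1 ≤ m + r),
    ← sum_range_add_sum_Ico _ (by omega : m ≤ r + 1), mul_add, mul_add,
    sub_one_mul_sum_range_pow_bandExponent_head α hmr le_rfl,
    sum_Ico_pow_bandExponent_middle α (by omega) le_rfl,
    sub_one_mul_sum_Ico_pow_bandExponent_tail α hmr (by omega) (by omega),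
    Nat.cast_sub hmr, Nat.sub_self, Nat.add_sub_cancel, Nat.add_sub_cancel_left]
  push_cast
  linear_combination heq

lemma sub_one_mul_sum_band_pow_bandExponent {a : ℕ} (ha : a < m + r) :
    (α - 1) * ∑ j ∈ range (m + r) with |(a : ℤ) - (j : ℕ)| ≤ r,
      α ^ (bandExponent m r a + bandExponent m r j) = α ^ m := by
  have htotal := sub_one_mul_sum_range_pow_bandExponent α hm hmr heq
  simp only [pow_add, ← mul_sum]
  rcases lt_or_ge (a + 1) m with ha_head | ha_head
  · have hband : {j ∈ range (m + r) | |(a : ℤ) - (j : ℕ)| ≤ r} = range (a + r + 1) := by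
      ext j; simp only [mem_filter, mem_range, abs_le]; omega
    rw [← sum_range_add_sum_Ico _ (by omega : a + r + 1 ≤ m + r), mul_add,
      sub_one_mul_sum_Ico_pow_bandExponent_tail α hmr (by omega) (by omega),
      Nat.add_sub_cancel, show a + r + 1 - r = a + 1 by omega] at htotal
    rw [hband, bandExponent_of_lt hmr (by omega : a < m), mul_left_comm,
      show (α - 1) * _ = α ^ (a + 1) by linear_combination htotal, ← pow_add]
    congr 1; omega
  rcases le_or_gt a r with ha_mid | ha_tail
  · have hband : {j ∈ range (m + r) | |(a : ℤ) - (j : ℕ)| ≤ r} = range (m + r) := by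
      ext j; simp only [mem_filter, mem_range, abs_le]; omega
    rw [hband, bandExponent_eq_zero ha_head ha_mid, pow_zero, one_mul, htotal]
  · have hband : {j ∈ range (m + r) | |(a : ℤ) - (j : ℕ)| ≤ r} = Ico (a - r) (m + r) := by
      ext j; simp only [mem_filter, mem_range, mem_Ico, abs_le]; omega
    rw [← sum_range_add_sum_Ico _ (by omega : a - r ≤ m + r), mul_add,
      sub_one_mul_sum_range_pow_bandExponent_head α hmr (by omega)] at htotal
    rw [hband, bandExponent_of_le hmr ha_tail.le, mul_left_comm,
      show (α - 1) * _ = α ^ (m - (a - r)) by linear_combination htotal, ← pow_add]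
    congr 1; omega

end BandSums

lemma one_lt_of_pow_add_mul_eq {α k : ℝ} (hα : 0 ≤ α) (hk : 0 ≤ k) (m : ℕ)
    (h : α ^ m + k * α = k + 2) : 1 < α := by
  by_contra! hα1
  nlinarith [pow_le_one₀ hα hα1 (n := m), mul_nonneg hk (sub_nonneg.2 hα1)]

/-- The matrix `Q_{r,n}` (second class, case `(n-1)/2 < r < n-1`), defined with
1-based indices `i+1, j+1` by `q_{i,j} = a_{i,j} · C · α^(μ_i + μ_j)` with
`C = (α-1)·α^(-(n-r))` and `α > 0` the root of
`α^(n-r) + (2r-n)·α - (2r-n+2) = 0`, is a doubly stochastic matrix with the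
same support as `A_{r,n}`. -/
theorem second_class_Q_large_radius_doubly_stochastic (n r : ℕ)
    (h1 : (n : ℤ) - 1 < 2 * (r : ℤ)) (h2 : (r : ℤ) < (n : ℤ) - 1)
    (α : ℝ) (hα : 0 < α)
    (heq : α ^ (n - r) + (2 * (r : ℝ) - (n : ℝ)) * α - (2 * (r : ℝ) - (n : ℝ) + 2) = 0)
    (C : ℝ) (hC : C = (α - 1) / α ^ (n - r))
    (μ : ℕ → ℕ)
    (hμ : ∀ i : ℕ, 1 ≤ i → i ≤ n →
      μ i = if i ≤ n - r then n - r - i else if i ≤ r + 1 then 0 else i - (r + 1))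
    (Q : Matrix (Fin n) (Fin n) ℝ)
    (hQ : ∀ i j : Fin n,
      Q i j =
        (if |((i : ℕ) : ℤ) - ((j : ℕ) : ℤ)| ≤ (r : ℤ) then (1 : ℝ) else 0) * C *
          α ^ (μ ((i : ℕ) + 1) + μ ((j : ℕ) + 1))) :
    (∀ i j, 0 ≤ Q i j) ∧
    (∀ i, ∑ j, Q i j = 1) ∧
    (∀ j, ∑ i, Q i j = 1) ∧
    (∀ i j : Fin n, Q i j ≠ 0 ↔ |((i : ℕ) : ℤ) - ((j : ℕ) : ℤ)| ≤ (r : ℤ)) := by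
  obtain ⟨m, rfl⟩ : ∃ m, n = m + r := ⟨n - r, by omega⟩
  simp only [Nat.add_sub_cancel] at heq hC hμ
  have heq' : α ^ m + ((r : ℝ) - m) * α = r - m + 2 := by push_cast at heq; linear_combination heq
  have hmr : (m : ℝ) ≤ r := by exact_mod_cast (by omega : m ≤ r)
  have hα1 : 1 < α := one_lt_of_pow_add_mul_eq hα.le (sub_nonneg.2 hmr) m heq'
  have hC0 : 0 < C := hC ▸ div_pos (by linarith) (pow_pos hα m)
  have hQ' : ∀ i j : Fin (m + r), Q i j = if |((i : ℕ) : ℤ) - ((j : ℕ) : ℤ)| ≤ r then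
      C * α ^ (bandExponent m r i + bandExponent m r j) else 0 := by
    intro i j
    have hexp : ∀ k < m + r, μ (k + 1) = bandExponent m r k := fun k hk => by
      rw [hμ (k + 1) (by omega) (by omega)]; unfold bandExponent; split_ifs <;> omega
    rw [hQ, hexp i i.isLt, hexp j j.isLt]
    split_ifs <;> ring
  have hrow : ∀ i : Fin (m + r), ∑ j, Q i j = 1 := by
    intro i
    rw [sum_congr rfl fun j _ => hQ' i j, Fin.sum_univ_eq_sum_range (fun j =>
        if |((i : ℕ) : ℤ) - (j : ℤ)| ≤ r then
          C * α ^ (bandExponent m r i + bandExponent m r j) else 0),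
      ← sum_filter, ← mul_sum, hC, div_mul_eq_mul_div,
      sub_one_mul_sum_band_pow_bandExponent α (by omega) (by omega) heq' i.isLt,
      div_self (pow_ne_zero m hα.ne')]
  have hsymm : ∀ i j, Q i j = Q j i := fun i j => by
    rw [hQ', hQ', abs_sub_comm, add_comm (bandExponent m r i)]
  refine ⟨fun i j => ?_, hrow, fun j => ?_, fun i j => ?_⟩
  · rw [hQ']; split_ifs <;> positivity
  · simpa only [hsymm _ j] using hrow j
  · rw [hQ']; split_ifs with h <;> simp [h, hC0.ne', hα.ne']
end

section
/- Let n be a positive integer and r an integer with 0 ≤ r ≤ n-1. If 0 < r ≤ (n-1)/2, then |B_{r,n}| ≤ ((2r+1)!)^{(n-2r)/(2r+1)} · ∏_{i=r+1}^{2r} (i!)^{2/i}. If (n-1)/2 ≤ r ≤ n-1, then |B_{r,n}| ≤ (n!)^{(2r+2-n)/n} · ∏_{i=r+1}^{n-1} (i!)^{2/i}. (Here the exponents are real numbers and powers are real powers.) -/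
/-!
The ball `B_{r,n}` is the set of perfect matchings of the band relation `|k - i| ≤ r` on `Fin n`,
so Bregman's bound `#{perfect matchings of A} ≤ ∏ᵢ (dᵢ!)^(1/dᵢ)` applies, `dᵢ` being the number
of `k` with `A i k`. The row degrees of the band are `r+1, …, r+a`, then `r+a+1` repeated `n-2a`
times, then `r+a, …, r+1`, where `a = min r (n-r-1)`; evaluating the product gives both formulas.

Bregman's bound is proved following Schrijver. If `A` has `P` perfect matchings, `P_{ik}` of which
send `i` to `k`, convexity of `x log x` gives `P^P ≤ dᵢ^P ∏_k P_{ik}^{P_{ik}} = ∏_σ dᵢ P_{iσ(i)}`.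
Bounding `P_{ik}` by induction on the minor of `A` obtained by deleting `i` and `k` and multiplying
over `i`, the right-hand side regroups row by row into `(∏ⱼ (dⱼ!)^(1/dⱼ))^(nP)`.
-/

open Finset Real
open scoped Nat

noncomputable def factorialRoot (m : ℕ) : ℝ := (m ! : ℝ) ^ ((m : ℝ)⁻¹)

lemma factorialRoot_nonneg (m : ℕ) : 0 ≤ factorialRoot m :=
  rpow_nonneg (Nat.cast_nonneg _) _

lemma factorialRoot_pow_eq_rpow {m : ℕ} (e : ℕ) :
    factorialRoot m ^ e = (m ! : ℝ) ^ ((e : ℝ) / m) := by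
  rw [factorialRoot, ← rpow_natCast, ← rpow_mul (Nat.cast_nonneg _), inv_mul_eq_div]

lemma factorialRoot_pow_self {m : ℕ} (hm : m ≠ 0) : factorialRoot m ^ m = m ! := by
  rw [factorialRoot_pow_eq_rpow, div_self (by exact_mod_cast hm), rpow_one]

lemma mul_factorialRoot_pred_pow {m : ℕ} (hm : m ≠ 0) :
    (m : ℝ) * factorialRoot (m - 1) ^ (m - 1) = factorialRoot m ^ m := by
  obtain ⟨k, rfl⟩ := Nat.exists_eq_succ_of_ne_zero hm
  rcases k.eq_zero_or_pos with rfl | hk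
  · simp [factorialRoot]
  · rw [Nat.succ_sub_one, factorialRoot_pow_self hk.ne', factorialRoot_pow_self hm,
      Nat.factorial_succ]
    push_cast
    ring

lemma pow_sum_div_card_le_prod_pow {ι : Type*} (t : Finset ι) (f : ι → ℕ) :
    ((∑ k ∈ t, (f k : ℝ)) / #t) ^ (∑ k ∈ t, f k) ≤ ∏ k ∈ t, (f k : ℝ) ^ f k := by
  set s := ∑ k ∈ t, f k with hs_def
  have hsum : ∑ k ∈ t, (f k : ℝ) = s := by push_cast [hs_def]; rfl
  have hpos : ∀ k ∈ t, 0 < (f k : ℝ) ^ f k := fun k _ => by exact_mod_cast Nat.pow_self_pos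
  rcases s.eq_zero_or_pos with hs | hs
  · rw [hs, pow_zero]
    exact Finset.one_le_prod fun k _ => by exact_mod_cast Nat.pow_self_pos
  have ht : (0 : ℝ) < #t := by
    obtain ⟨k, hk, -⟩ := exists_ne_zero_of_sum_ne_zero hs.ne'
    exact_mod_cast card_pos.mpr ⟨k, hk⟩
  have hjensen := convexOn_mul_log.map_sum_le (t := t) (w := fun _ => (#t : ℝ)⁻¹)
    (p := fun k => (f k : ℝ)) (fun _ _ => by positivity)
    (by rw [sum_const, nsmul_eq_mul, mul_inv_cancel₀ ht.ne'])
    (fun _ _ => Set.mem_Ici.mpr (Nat.cast_nonneg _))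
  rw [← smul_sum, ← smul_sum, hsum, smul_eq_mul, smul_eq_mul, inv_mul_eq_div] at hjensen
  rw [hsum, ← log_le_log_iff (by positivity) (prod_pos hpos), Real.log_pow,
    log_prod fun k hk => (hpos k hk).ne']
  simp only [Real.log_pow]
  rwa [div_mul_eq_mul_div, div_eq_inv_mul, mul_le_mul_iff_right₀ (inv_pos.2 ht)] at hjensen

section Bregman

open scoped Classical

variable {α β : Type*} (A : α → β → Prop)

def minor (i : α) (k : β) : {x // x ≠ i} → {y // y ≠ k} → Prop := fun x y => A x y

section RowDegree

variable [Fintype β]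

noncomputable def rowDegree (i : α) : ℕ := #{k | A i k}

variable {A}

lemma rowDegree_minor (i : α) (k : β) (j : {x // x ≠ i}) :
    rowDegree (minor A i k) j = rowDegree A j - if A j k then 1 else 0 := by
  have hmap : ({y | minor A i k j y} : Finset {y // y ≠ k}).map (Function.Embedding.subtype _)
      = ({y | A j y} : Finset β).erase k := by
    ext y
    simp only [mem_map, mem_filter, mem_univ, true_and, mem_erase, Function.Embedding.coe_subtype]
    exact ⟨fun ⟨y, hy, e⟩ => e ▸ ⟨y.2, hy⟩, fun ⟨hy, h⟩ => ⟨⟨y, hy⟩, h, rfl⟩⟩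
  rw [rowDegree, ← card_map, hmap, card_erase_eq_ite, rowDegree]
  split_ifs <;> simp_all

lemma mul_prod_erase_factorialRoot {p : β → Prop} {y₀ : β} (hy₀ : p y₀) :
    (#{y | p y} : ℝ) * ∏ y ∈ univ.erase y₀, factorialRoot (#{y | p y} - if p y then 1 else 0)
      = factorialRoot #{y | p y} ^ Fintype.card β := by
  set d := #{y | p y}
  have hd : d ≠ 0 := card_ne_zero_of_mem (mem_filter.mpr ⟨mem_univ y₀, hy₀⟩)
  have hpos : #((univ.erase y₀).filter p) = d - 1 := by
    rw [filter_erase, card_erase_of_mem (mem_filter.mpr ⟨mem_univ y₀, hy₀⟩)]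
  have hneg : #((univ.erase y₀).filter (¬ p ·)) = Fintype.card β - d := by
    rw [filter_erase, erase_eq_of_notMem (by simpa using hy₀), ← card_univ,
      ← card_filter_add_card_filter_not (s := univ) p, Nat.add_sub_cancel_left]
  have hsplit (y : β) : factorialRoot (d - if p y then 1 else 0)
      = if p y then factorialRoot (d - 1) else factorialRoot d := by
    split_ifs <;> rfl
  rw [prod_congr rfl fun y _ => hsplit y, prod_ite, prod_const, prod_const, hpos, hneg, ← mul_assoc,
    mul_factorialRoot_pred_pow hd, ← pow_add, Nat.add_sub_cancel' (card_le_univ _)]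

end RowDegree

variable [Fintype α] [Fintype β]

noncomputable def perfectMatchings : Finset (α ≃ β) := {σ | ∀ i, A i (σ i)}

noncomputable def matchingsThrough (i : α) (k : β) : Finset (α ≃ β) :=
  {σ ∈ perfectMatchings A | σ i = k}

noncomputable def bregmanBound : ℝ := ∏ i, factorialRoot (rowDegree A i)

variable {A}

lemma mem_perfectMatchings {σ : α ≃ β} : σ ∈ perfectMatchings A ↔ ∀ i, A i (σ i) := by
  simp [perfectMatchings]

lemma mem_matchingsThrough {σ : α ≃ β} {i : α} {k : β} :
    σ ∈ matchingsThrough A i k ↔ σ ∈ perfectMatchings A ∧ σ i = k :=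
  mem_filter

lemma sum_card_matchingsThrough (i : α) :
    ∑ k, #(matchingsThrough A i k) = #(perfectMatchings A) :=
  (card_eq_sum_card_fiberwise fun σ _ => mem_univ (σ i)).symm

lemma matchingsThrough_eq_empty {i : α} {k : β} (h : ¬ A i k) : matchingsThrough A i k = ∅ :=
  filter_eq_empty_iff.mpr fun _ hσ hσk => h (hσk ▸ mem_perfectMatchings.mp hσ i)

lemma prod_perfectMatchings_apply {M : Type*} [CommMonoid M] (i : α) (g : β → M) :
    ∏ σ ∈ perfectMatchings A, g (σ i) = ∏ k, g k ^ #(matchingsThrough A i k) := by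
  rw [← prod_fiberwise' (perfectMatchings A) (fun σ => σ i) g]
  simp only [prod_const, matchingsThrough]

lemma card_perfectMatchings_pow_le_prod (i : α) :
    (#(perfectMatchings A) : ℝ) ^ #(perfectMatchings A)
      ≤ ∏ σ ∈ perfectMatchings A, ((rowDegree A i : ℝ) * #(matchingsThrough A i (σ i))) := by
  have hout : ∀ k ∉ ({k | A i k} : Finset β), #(matchingsThrough A i k) = 0 := fun k hk => by
    rw [matchingsThrough_eq_empty (by simpa using hk), card_empty]
  have hsum : ∑ k ∈ {k | A i k}, #(matchingsThrough A i k) = #(perfectMatchings A) := by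
    rw [← sum_card_matchingsThrough i, sum_subset (subset_univ _) fun k _ => hout k]
  have hjensen := pow_sum_div_card_le_prod_pow {k | A i k} (fun k => #(matchingsThrough A i k))
  rw [← Nat.cast_sum, hsum, prod_subset (subset_univ _) fun k _ hk => by simp [hout k hk]]
    at hjensen
  have hsplit : (#(perfectMatchings A) : ℝ) ^ #(perfectMatchings A)
      = (rowDegree A i : ℝ) ^ #(perfectMatchings A)
        * (#(perfectMatchings A) / rowDegree A i : ℝ) ^ #(perfectMatchings A) := by
    rcases eq_or_ne (rowDegree A i) 0 with hd | hd
    · have hP : #(perfectMatchings A) = 0 := by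
        rw [← hsum, card_eq_zero.mp hd, sum_empty]
      simp [hP]
    · rw [← mul_pow, mul_div_cancel₀ _ (by exact_mod_cast hd)]
  rw [prod_mul_distrib, prod_const,
    prod_perfectMatchings_apply i fun k => (#(matchingsThrough A i k) : ℝ), hsplit]
  exact mul_le_mul_of_nonneg_left hjensen (by positivity)

lemma card_matchingsThrough_le_card_minor (i : α) (k : β) :
    #(matchingsThrough A i k) ≤ #(perfectMatchings (minor A i k)) := by
  have hne (σ : α ≃ β) (hσ : σ i = k) (x : α) : x ≠ i ↔ σ x ≠ k := by
    rw [← hσ, σ.injective.ne_iff]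
  let restrict (σ : matchingsThrough A i k) : perfectMatchings (minor A i k) :=
    ⟨σ.1.subtypeEquiv (hne σ.1 (mem_matchingsThrough.mp σ.2).2),
      mem_perfectMatchings.mpr fun x => mem_perfectMatchings.mp (mem_matchingsThrough.mp σ.2).1 x⟩
  have hinj : Function.Injective restrict := by
    rintro ⟨σ, hσ⟩ ⟨τ, hτ⟩ h
    ext x
    by_cases hx : x = i
    · rw [hx, (mem_matchingsThrough.mp hσ).2, (mem_matchingsThrough.mp hτ).2]
    · exact congrArg Subtype.val (Equiv.congr_fun (congrArg Subtype.val h) ⟨x, hx⟩)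
  simpa using Fintype.card_le_of_injective restrict hinj

lemma card_matchingsThrough_le_of_minor (i : α) (k : β)
    (hminor : (#(perfectMatchings (minor A i k)) : ℝ) ≤ bregmanBound (minor A i k)) :
    (#(matchingsThrough A i k) : ℝ)
      ≤ ∏ j ∈ univ.erase i, factorialRoot (rowDegree A j - if A j k then 1 else 0) :=
  calc (#(matchingsThrough A i k) : ℝ) ≤ #(perfectMatchings (minor A i k)) := by
        exact_mod_cast card_matchingsThrough_le_card_minor i k
    _ ≤ bregmanBound (minor A i k) := hminor
    _ = _ := by
        simp_rw [bregmanBound, rowDegree_minor]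
        exact (prod_subtype (univ.erase i) (p := (· ≠ i)) (fun _ => by simp)
          fun j => factorialRoot (rowDegree A j - if A j k then 1 else 0)).symm

lemma prod_rowDegree_mul_prod_erase {σ : α ≃ β} (hσ : σ ∈ perfectMatchings A) :
    ∏ i, ((rowDegree A i : ℝ)
        * ∏ j ∈ univ.erase i, factorialRoot (rowDegree A j - if A j (σ i) then 1 else 0))
      = bregmanBound A ^ Fintype.card β := by
  rw [prod_mul_distrib, prod_comm' (t' := univ) (s' := fun j => univ.erase j) (by simp [ne_comm]),
    ← prod_mul_distrib, bregmanBound, ← prod_pow]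
  refine prod_congr rfl fun j _ => ?_
  rw [prod_equiv σ (t := univ.erase (σ j)) (by simp)
    (g := fun y => factorialRoot (rowDegree A j - if A j y then 1 else 0)) fun _ _ => rfl]
  exact mul_prod_erase_factorialRoot (mem_perfectMatchings.mp hσ j)

lemma card_perfectMatchings_le_of_minor
    (hminor : ∀ i k, (#(perfectMatchings (minor A i k)) : ℝ) ≤ bregmanBound (minor A i k)) :
    (#(perfectMatchings A) : ℝ) ≤ bregmanBound A := by
  have hbound : 0 ≤ bregmanBound A := prod_nonneg fun i _ => factorialRoot_nonneg _
  obtain hempty | ⟨σ₀, hσ₀⟩ := (perfectMatchings A).eq_empty_or_nonempty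
  · simpa [hempty] using hbound
  rcases isEmpty_or_nonempty α with hα | hα
  · have : #(perfectMatchings A) ≤ 1 :=
      card_le_one.mpr fun σ _ τ _ => Equiv.ext fun x => isEmptyElim x
    simpa [bregmanBound] using this
  set P := #(perfectMatchings A)
  have hP : P ≠ 0 := card_ne_zero_of_mem hσ₀
  have hcard : Fintype.card α = Fintype.card β := Fintype.card_congr σ₀
  refine le_of_pow_le_pow_left₀ (mul_ne_zero (Fintype.card_ne_zero (α := α)) hP) hbound ?_
  calc (P : ℝ) ^ (Fintype.card α * P) = ∏ _i : α, (P : ℝ) ^ P := by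
        rw [prod_const, card_univ, pow_mul']
    _ ≤ ∏ i, ∏ σ ∈ perfectMatchings A, ((rowDegree A i : ℝ) * #(matchingsThrough A i (σ i))) :=
        prod_le_prod (fun _ _ => by positivity) fun i _ => card_perfectMatchings_pow_le_prod i
    _ = ∏ σ ∈ perfectMatchings A, ∏ i, ((rowDegree A i : ℝ) * #(matchingsThrough A i (σ i))) :=
        prod_comm
    _ ≤ ∏ σ ∈ perfectMatchings A, ∏ i, ((rowDegree A i : ℝ)
          * ∏ j ∈ univ.erase i, factorialRoot (rowDegree A j - if A j (σ i) then 1 else 0)) := by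
        refine prod_le_prod (fun _ _ => prod_nonneg fun _ _ => by positivity) fun σ _ => ?_
        refine prod_le_prod (fun _ _ => by positivity) fun i _ => ?_
        exact mul_le_mul_of_nonneg_left
          (card_matchingsThrough_le_of_minor i (σ i) (hminor i (σ i))) (Nat.cast_nonneg _)
    _ = ∏ σ ∈ perfectMatchings A, bregmanBound A ^ Fintype.card β :=
        prod_congr rfl fun σ hσ => prod_rowDegree_mul_prod_erase hσ
    _ = bregmanBound A ^ (Fintype.card α * P) := by
        rw [prod_const, ← pow_mul, hcard, mul_comm]

theorem card_perfectMatchings_le_bregmanBound (A : α → β → Prop) :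
    (#(perfectMatchings A) : ℝ) ≤ bregmanBound A := by
  induction hn : Fintype.card α generalizing α β with
  | zero =>
    exact card_perfectMatchings_le_of_minor fun i => (Fintype.card_eq_zero_iff.mp hn).elim i
  | succ n ih =>
    exact card_perfectMatchings_le_of_minor fun i k => ih (minor A i k) (by simp [hn])

end Bregman

def band (n r : ℕ) (i k : Fin n) : Prop := |((k : ℕ) : ℤ) - ((i : ℕ) : ℤ)| ≤ r

lemma rowDegree_band (n r : ℕ) (i : Fin n) :
    rowDegree (band n r) i = min (i + r + 1) n - (i - r) := by
  classical
  have hmap : ({k | band n r i k} : Finset (Fin n)).map Fin.valEmbedding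
      = Ico (i - r) (min (i + r + 1) n) := by
    ext m
    simp only [mem_map, mem_filter, mem_univ, true_and, Fin.valEmbedding_apply, mem_Ico, band,
      abs_le]
    constructor
    · rintro ⟨k, hk, rfl⟩
      omega
    · exact fun hm => ⟨⟨m, by omega⟩, by dsimp only; omega, rfl⟩
  rw [rowDegree, ← card_map, hmap, Nat.card_Ico]

lemma card_ball_le_bregmanBound (n r : ℕ) :
    (#{g : Equiv.Perm (Fin n) | ∀ i, |((g i : ℕ) : ℤ) - ((i : ℕ) : ℤ)| ≤ (r : ℤ)} : ℝ)
      ≤ bregmanBound (band n r) := by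
  convert card_perfectMatchings_le_bregmanBound (band n r)
  ext g
  simp [mem_perfectMatchings, band]

lemma bregmanBound_band (n r : ℕ) :
    bregmanBound (band n r) = ∏ m ∈ range n, factorialRoot (min (m + r + 1) n - (m - r)) := by
  rw [bregmanBound, ← Fin.prod_univ_eq_prod_range]
  simp_rw [rowDegree_band]

lemma prod_range_factorialRoot_band {n r : ℕ} (hr : r < n) :
    ∏ m ∈ range n, factorialRoot (min (m + r + 1) n - (m - r))
      = factorialRoot (r + min r (n - r - 1) + 1) ^ (n - 2 * min r (n - r - 1))
        * (∏ i ∈ Icc (r + 1) (r + min r (n - r - 1)), factorialRoot i) ^ 2 := by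
  set a := min r (n - r - 1)
  have hlow : ∏ m ∈ Ico 0 a, factorialRoot (min (m + r + 1) n - (m - r))
      = ∏ i ∈ Icc (r + 1) (r + a), factorialRoot i := by
    rw [prod_congr rfl fun m hm => congrArg factorialRoot
        (show min (m + r + 1) n - (m - r) = m + (r + 1) by rw [mem_Ico] at hm; omega),
      prod_Ico_add', zero_add, show a + (r + 1) = r + a + 1 by omega,
      Ico_add_one_right_eq_Icc]
  have hmid : ∏ m ∈ Ico a (n - a), factorialRoot (min (m + r + 1) n - (m - r))
      = factorialRoot (r + a + 1) ^ (n - 2 * a) := by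
    rw [prod_congr rfl fun m hm => congrArg factorialRoot
        (show min (m + r + 1) n - (m - r) = r + a + 1 by rw [mem_Ico] at hm; omega),
      prod_const, Nat.card_Ico, show n - a - a = n - 2 * a by omega]
  have hhigh : ∏ m ∈ Ico (n - a) n, factorialRoot (min (m + r + 1) n - (m - r))
      = ∏ i ∈ Icc (r + 1) (r + a), factorialRoot i := by
    rw [prod_congr rfl fun m hm => congrArg factorialRoot
        (show min (m + r + 1) n - (m - r) = n + r - m by rw [mem_Ico] at hm; omega),
      prod_Ico_reflect _ _ (by omega), show n + r + 1 - n = r + 1 by omega,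
      show n + r + 1 - (n - a) = r + a + 1 by omega, Ico_add_one_right_eq_Icc]
  rw [range_eq_Ico, ← prod_Ico_consecutive _ (Nat.zero_le (n - a)) (Nat.sub_le n a),
    ← prod_Ico_consecutive _ (Nat.zero_le a) (by omega : a ≤ n - a), hlow, hmid, hhigh]
  ring

lemma prod_factorialRoot_sq (s : Finset ℕ) :
    (∏ i ∈ s, factorialRoot i) ^ 2 = ∏ i ∈ s, (i ! : ℝ) ^ ((2 : ℝ) / i) := by
  rw [← prod_pow]
  exact prod_congr rfl fun i _ => by rw [factorialRoot_pow_eq_rpow, Nat.cast_ofNat]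

lemma bregmanBound_band_of_two_mul_add_one_le {n r : ℕ} (h : 2 * r + 1 ≤ n) :
    bregmanBound (band n r)
      = ((2 * r + 1)! : ℝ) ^ (((n : ℝ) - 2 * (r : ℝ)) / (2 * (r : ℝ) + 1))
        * ∏ i ∈ Icc (r + 1) (2 * r), (i ! : ℝ) ^ ((2 : ℝ) / (i : ℝ)) := by
  rw [bregmanBound_band, prod_range_factorialRoot_band (by omega), min_eq_left (by omega),
    show r + r = 2 * r by ring, prod_factorialRoot_sq, factorialRoot_pow_eq_rpow,
    Nat.cast_sub (by omega)]
  push_cast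
  ring_nf

lemma bregmanBound_band_of_le_two_mul_add_one {n r : ℕ} (hr : r < n) (h : n ≤ 2 * r + 1) :
    bregmanBound (band n r)
      = (n ! : ℝ) ^ ((2 * (r : ℝ) + 2 - (n : ℝ)) / (n : ℝ))
        * ∏ i ∈ Icc (r + 1) (n - 1), (i ! : ℝ) ^ ((2 : ℝ) / (i : ℝ)) := by
  rw [bregmanBound_band, prod_range_factorialRoot_band hr, min_eq_right (by omega),
    show r + (n - r - 1) = n - 1 by omega, show n - 1 + 1 = n by omega,
    show n - 2 * (n - r - 1) = 2 * r + 2 - n by omega,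
    prod_factorialRoot_sq, factorialRoot_pow_eq_rpow, Nat.cast_sub (by omega)]
  push_cast
  ring_nf

/-- Known upper bounds on the ball size: if `0 < r ≤ (n-1)/2` then
`|B_{r,n}| ≤ ((2r+1)!)^((n-2r)/(2r+1)) · ∏_{i=r+1}^{2r} (i!)^(2/i)`, and if
`(n-1)/2 ≤ r ≤ n-1` then
`|B_{r,n}| ≤ (n!)^((2r+2-n)/n) · ∏_{i=r+1}^{n-1} (i!)^(2/i)`,
where the exponents are real numbers and powers are real powers. -/
theorem ball_size_known_upper_bounds (n r : ℕ) (hn : 0 < n) (hr : r ≤ n - 1) :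
    (0 < r → 2 * r + 1 ≤ n →
      ((Finset.univ.filter
          (fun g : Equiv.Perm (Fin n) =>
            ∀ i : Fin n, |((g i : ℕ) : ℤ) - ((i : ℕ) : ℤ)| ≤ (r : ℤ))).card : ℝ)
        ≤ ((Nat.factorial (2 * r + 1) : ℝ)
              ^ (((n : ℝ) - 2 * (r : ℝ)) / (2 * (r : ℝ) + 1)))
            * ∏ i ∈ Finset.Icc (r + 1) (2 * r),
                (Nat.factorial i : ℝ) ^ ((2 : ℝ) / (i : ℝ))) ∧
    (n ≤ 2 * r + 1 →
      ((Finset.univ.filter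
          (fun g : Equiv.Perm (Fin n) =>
            ∀ i : Fin n, |((g i : ℕ) : ℤ) - ((i : ℕ) : ℤ)| ≤ (r : ℤ))).card : ℝ)
        ≤ ((n.factorial : ℝ) ^ ((2 * (r : ℝ) + 2 - (n : ℝ)) / (n : ℝ)))
            * ∏ i ∈ Finset.Icc (r + 1) (n - 1),
                (Nat.factorial i : ℝ) ^ ((2 : ℝ) / (i : ℝ))) :=
  ⟨fun _ h => (card_ball_le_bregmanBound n r).trans_eq
      (bregmanBound_band_of_two_mul_add_one_le h),
    fun h => (card_ball_le_bregmanBound n r).trans_eq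
      (bregmanBound_band_of_le_two_mul_add_one (by omega) h)⟩
end
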